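/- arXiv:2108.10777 — 5 statements merged into one kernel-verified Lean document; each statement's English description precedes it below -/
import Mathlib

section
/- Let K be a field, and let f, g ∈ K[x] be polynomials of degree 3. Suppose there exist two distinct unordered pairs {x₁, y₁} ≠ {x₂, y₂} of elements of K with x₁ ≠ y₁ and x₂ ≠ y₂ such that f(x₁) = f(y₁), f(x₂) = f(y₂), g(x₁) = g(y₁), and g(x₂) = g(y₂). Then there exists a linear polynomial ℓ(x) = cx + e with c ≠ 0 such that f = ℓ ∘ g. -/
open Polynomial

/-! For `deg p ≤ 3`, `p(x) - p(y) = (x - y) (a₃ (x² + xy + y²) + a₂ (x + y) + a₁)`, and the sum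
`x + y` together with `x² + xy + y²` determines the pair `{x, y}`. Hence the two coincidence pairs
of the cubic `f` have different sums. With `c` chosen to cancel the cubic terms, `h = f - c g` has
degree `≤ 2` and the same two coincidence pairs, so `a₂ (x + y) + a₁` vanishes at two different
sums: `h` is constant. -/

theorem Set.pair_eq_pair_of_add_eq_of_mul_eq {R : Type*} [CommRing R] [NoZeroDivisors R]
    {x₁ y₁ x₂ y₂ : R} (hs : x₁ + y₁ = x₂ + y₂) (hp : x₁ * y₁ = x₂ * y₂) :
    ({x₁, y₁} : Set R) = {x₂, y₂} := by
  have hroot : (x₂ - x₁) * (x₂ - y₁) = 0 := by linear_combination -x₂ * hs + hp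
  rcases mul_eq_zero.mp hroot with h | h
  · obtain rfl : x₂ = x₁ := sub_eq_zero.mp h
    rw [add_left_cancel hs]
  · obtain rfl : x₂ = y₁ := sub_eq_zero.mp h
    obtain rfl : x₁ = y₂ := add_left_cancel ((add_comm x₂ x₁).trans hs)
    exact Set.pair_comm _ _

namespace Polynomial

section CommRing

variable {R : Type*} [CommRing R]

theorem eval_sub_eval_of_natDegree_le_three {p : R[X]} (hp : p.natDegree ≤ 3) (x y : R) :
    p.eval x - p.eval y =
      (x - y) * (p.coeff 3 * (x ^ 2 + x * y + y ^ 2) + p.coeff 2 * (x + y) + p.coeff 1) := by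
  simp only [eval_eq_sum_range' (Nat.lt_succ_of_le hp), Finset.sum_range_succ,
    Finset.sum_range_zero]
  ring

variable [NoZeroDivisors R] {x₁ y₁ x₂ y₂ : R}

theorem coeff_three_mul_add_coeff_two_mul_add_coeff_one_eq_zero {p : R[X]}
    (hp : p.natDegree ≤ 3) {x y : R} (hxy : x ≠ y) (h : p.eval x = p.eval y) :
    p.coeff 3 * (x ^ 2 + x * y + y ^ 2) + p.coeff 2 * (x + y) + p.coeff 1 = 0 := by
  have := eval_sub_eval_of_natDegree_le_three hp x y
  rw [sub_eq_zero.mpr h, eq_comm, mul_eq_zero] at this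
  exact this.resolve_left (sub_ne_zero.mpr hxy)

theorem add_ne_add_of_eval_eq_of_natDegree_eq_three {p : R[X]} (hp : p.natDegree = 3)
    (h₁ : x₁ ≠ y₁) (h₂ : x₂ ≠ y₂) (hpairs : ({x₁, y₁} : Set R) ≠ {x₂, y₂})
    (hp₁ : p.eval x₁ = p.eval y₁) (hp₂ : p.eval x₂ = p.eval y₂) : x₁ + y₁ ≠ x₂ + y₂ := by
  intro hs
  have h₃ : p.coeff 3 ≠ 0 := by
    rw [← hp, coeff_natDegree]
    exact leadingCoeff_ne_zero.mpr (ne_zero_of_natDegree_gt (n := 0) (by omega))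
  have E₁ := coeff_three_mul_add_coeff_two_mul_add_coeff_one_eq_zero hp.le h₁ hp₁
  have E₂ := coeff_three_mul_add_coeff_two_mul_add_coeff_one_eq_zero hp.le h₂ hp₂
  have hq : x₁ ^ 2 + x₁ * y₁ + y₁ ^ 2 = x₂ ^ 2 + x₂ * y₂ + y₂ ^ 2 :=
    mul_left_cancel₀ h₃ (by linear_combination E₁ - E₂ - p.coeff 2 * hs)
  exact hpairs <| Set.pair_eq_pair_of_add_eq_of_mul_eq hs <| by
    linear_combination (x₁ + y₁ + x₂ + y₂) * hs - hq

theorem eq_C_of_natDegree_le_two_of_eval_eq {p : R[X]} (hp : p.natDegree ≤ 2)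
    (h₁ : x₁ ≠ y₁) (h₂ : x₂ ≠ y₂) (hs : x₁ + y₁ ≠ x₂ + y₂)
    (hp₁ : p.eval x₁ = p.eval y₁) (hp₂ : p.eval x₂ = p.eval y₂) : p = C (p.coeff 0) := by
  have E₁ := coeff_three_mul_add_coeff_two_mul_add_coeff_one_eq_zero (hp.trans le_add_self) h₁ hp₁
  have E₂ := coeff_three_mul_add_coeff_two_mul_add_coeff_one_eq_zero (hp.trans le_add_self) h₂ hp₂
  rw [coeff_eq_zero_of_natDegree_lt (by omega), zero_mul, zero_add] at E₁ E₂
  have hc₂ : p.coeff 2 = 0 := by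
    have : p.coeff 2 * (x₁ + y₁ - (x₂ + y₂)) = 0 := by linear_combination E₁ - E₂
    exact (mul_eq_zero.mp this).resolve_right (sub_ne_zero.mpr hs)
  have hc₁ : p.coeff 1 = 0 := by simpa [hc₂] using E₁
  refine eq_C_of_natDegree_le_zero (natDegree_le_iff_coeff_eq_zero.mpr fun N hN => ?_)
  match N with
  | 1 => exact hc₁
  | 2 => exact hc₂
  | N + 3 => exact coeff_eq_zero_of_natDegree_lt (by omega)

end CommRing

theorem natDegree_sub_C_div_mul_le {K : Type*} [Field K] {f g : K[X]} {n : ℕ}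
    (hf : f.natDegree = n + 1) (hg : g.natDegree = n + 1) :
    (f - C (f.leadingCoeff / g.leadingCoeff) * g).natDegree ≤ n := by
  have hg₀ : g.leadingCoeff ≠ 0 :=
    leadingCoeff_ne_zero.mpr (ne_zero_of_natDegree_gt (n := 0) (by omega))
  refine natDegree_le_iff_coeff_eq_zero.mpr fun N hN => ?_
  rw [coeff_sub, coeff_C_mul, sub_eq_zero]
  obtain rfl | hN := Nat.lt_iff_add_one_le.mp hN |>.eq_or_lt
  · rw [← hf, coeff_natDegree, hf, ← hg, coeff_natDegree, div_mul_cancel₀ _ hg₀]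
  · rw [coeff_eq_zero_of_natDegree_lt (by omega), coeff_eq_zero_of_natDegree_lt (by omega),
      mul_zero]

end Polynomial

theorem stmt_2 {K : Type*} [Field K]
    (f g : K[X]) (hf : f.natDegree = 3) (hg : g.natDegree = 3)
    (x₁ y₁ x₂ y₂ : K) (h₁ : x₁ ≠ y₁) (h₂ : x₂ ≠ y₂)
    (hpairs : ({x₁, y₁} : Set K) ≠ ({x₂, y₂} : Set K))
    (hf₁ : f.eval x₁ = f.eval y₁) (hf₂ : f.eval x₂ = f.eval y₂)
    (hg₁ : g.eval x₁ = g.eval y₁) (hg₂ : g.eval x₂ = g.eval y₂) :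
    ∃ c e : K, c ≠ 0 ∧ f = (C c * X + C e).comp g := by
  have hs := add_ne_add_of_eval_eq_of_natDegree_eq_three hf h₁ h₂ hpairs hf₁ hf₂
  set c := f.leadingCoeff / g.leadingCoeff
  have hc : c ≠ 0 := div_ne_zero
    (leadingCoeff_ne_zero.mpr (ne_zero_of_natDegree_gt (n := 0) (by omega)))
    (leadingCoeff_ne_zero.mpr (ne_zero_of_natDegree_gt (n := 0) (by omega)))
  have hconst := eq_C_of_natDegree_le_two_of_eval_eq (natDegree_sub_C_div_mul_le hf hg) h₁ h₂ hs
    (by simp only [eval_sub, eval_mul, eval_C, hf₁, hg₁])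
    (by simp only [eval_sub, eval_mul, eval_C, hf₂, hg₂])
  refine ⟨c, (f - C c * g).coeff 0, hc, ?_⟩
  rw [add_comp, mul_comp, C_comp, X_comp, C_comp, ← hconst]
  ring
end

section
/- Let K be a field, let d ≥ 1, and let A = {a₁,...,a_d} and B = {b₁,...,b_d} be two disjoint d-element subsets of K such that e_k(A) = e_k(B) for all 1 ≤ k ≤ d−1, where e_k denotes the k-th elementary symmetric function. Then the polynomial f(x) := x^d − e₁(A)x^{d−1} + e₂(A)x^{d−2} − ... + (−1)^{d−1} e_{d−1}(A) x is constant on A and constant on B; that is, there exist u, v ∈ K with f(a) = u for all a ∈ A and f(b) = v for all b ∈ B. -/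
open Polynomial

lemma key7 {K : Type*} [Field K] (d : ℕ) (hd : 1 ≤ d) (s : Multiset K)
    (hc : Multiset.card s = d) :
    X ^ d + ∑ k ∈ Finset.Icc 1 (d - 1), C ((-1 : K) ^ k * s.esymm k) * X ^ (d - k)
      = (s.map fun t => X - C t).prod - C ((-1 : K) ^ d * s.esymm d) := by
  obtain ⟨e, rfl⟩ : ∃ e, d = e + 1 := ⟨d - 1, (Nat.succ_pred_eq_of_pos hd).symm⟩
  have hIcc : Finset.Icc 1 (e + 1 - 1) = Finset.Ico 1 (e + 1) := by
    rw [← Finset.Ico_add_one_right_eq_Icc]; congr 1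
  rw [hIcc, Finset.sum_Ico_eq_sum_range, Multiset.prod_X_sub_X_eq_sum_esymm, hc,
    Finset.sum_range_succ, Finset.sum_range_succ']
  have h0 : s.esymm 0 = 1 := by simp [Multiset.esymm]
  have hsum : ∀ i ∈ Finset.range (e + 1 - 1),
      C ((-1 : K) ^ (1 + i) * s.esymm (1 + i)) * X ^ (e + 1 - (1 + i))
        = (-1 : K[X]) ^ (i + 1) * (C (s.esymm (i + 1)) * X ^ (e + 1 - (i + 1))) := by
    intro i _
    rw [add_comm 1 i]
    simp [map_mul, map_pow]
    ring
  rw [Finset.sum_congr rfl hsum, h0]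
  simp [map_mul, map_pow]
  ring

lemma key7' {K : Type*} [Field K] (d : ℕ) (hd : 1 ≤ d) (s : Finset K)
    (hc : s.card = d) (x : K) (hx : x ∈ s) :
    eval x (X ^ d + ∑ k ∈ Finset.Icc 1 (d - 1),
      C ((-1 : K) ^ k * s.val.esymm k) * X ^ (d - k)) = -((-1 : K) ^ d * s.val.esymm d) := by
  rw [key7 d hd s.val hc]
  have : eval x ((s.val.map fun t => X - C t).prod) = 0 := by
    rw [eval_multiset_prod]
    apply Multiset.prod_eq_zero
    rw [Multiset.map_map]
    refine Multiset.mem_map.2 ⟨x, hx, ?_⟩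
    simp
  rw [eval_sub, this, eval_C, zero_sub]

theorem stmt_7 {K : Type*} [Field K] (d : ℕ) (hd : 1 ≤ d)
    (A B : Finset K) (hA : A.card = d) (hB : B.card = d) (hAB : Disjoint A B)
    (hesymm : ∀ k : ℕ, 1 ≤ k → k ≤ d - 1 → A.val.esymm k = B.val.esymm k)
    (f : K[X])
    (hf : f = X ^ d + ∑ k ∈ Finset.Icc 1 (d - 1),
      C ((-1 : K) ^ k * A.val.esymm k) * X ^ (d - k)) :
    ∃ u v : K, (∀ a ∈ A, f.eval a = u) ∧ (∀ b ∈ B, f.eval b = v) := by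
  have hfB : f = X ^ d + ∑ k ∈ Finset.Icc 1 (d - 1),
      C ((-1 : K) ^ k * B.val.esymm k) * X ^ (d - k) := by
    rw [hf]
    congr 1
    apply Finset.sum_congr rfl
    intro k hk
    rw [Finset.mem_Icc] at hk
    rw [hesymm k hk.1 hk.2]
  refine ⟨-((-1 : K) ^ d * A.val.esymm d), -((-1 : K) ^ d * B.val.esymm d), ?_, ?_⟩
  · intro a ha
    rw [hf]
    exact key7' d hd A hA a ha
  · intro b hb
    rw [hfB]
    exact key7' d hd B hB b hb
end

section
/- Let K be a field, d ≥ 1, and let q = (q₁,...,q_{2d}) be 2d distinct elements of K partitioned into two d-element sets q_A and q_B. Suppose there exist a polynomial f of degree d, constant on q_A with value in q and constant on q_B with value in q, with the two values distinct. Then there exist at least 2d(2d−1) distinct degree-d polynomials g ∈ K[x] such that g({q₁,...,q_{2d}}) ⊆ {q₁,...,q_{2d}}. -/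
/-!
If `f` takes the value `u` on `q_A` and `v ≠ u` on `q_B`, then for every ordered pair `(x, y)` of
distinct points of `q`, post-composing `f` with the affine map `u ↦ x`, `v ↦ y` gives a degree-`d`
polynomial mapping `q_A` to `x` and `q_B` to `y`, hence `q` into itself. Reading off its values on
`q_A` and `q_B` recovers `(x, y)`, so these `2d(2d-1)` polynomials are distinct; and there are
only finitely many such self-maps of `q` at all, since a polynomial of degree `< 2d` is determined
by its values at the `2d` points of `q`.
-/

open Polynomial

namespace Polynomial

variable {K : Type*} [Field K]

theorem finite_setOf_natDegree_lt_card_eval_mem {ι : Type*} [Fintype ι] {q : ι → K}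
    (hq : Function.Injective q) {T : Set K} (hT : T.Finite) :
    {g : K[X] | g.natDegree < Fintype.card ι ∧ ∀ i, g.eval (q i) ∈ T}.Finite := by
  refine Set.Finite.of_finite_image (f := fun g i => g.eval (q i)) ?_ ?_
  · refine (Set.Finite.pi fun _ => hT).subset ?_
    rintro _ ⟨g, hg, rfl⟩ i -
    exact hg.2 i
  · intro g hg g' hg' h
    exact eq_of_natDegree_lt_card_of_eval_eq g g' hq (congrFun h) (max_lt hg.1 hg'.1)

/-- `f` post-composed with the affine map of `K` sending `u ↦ x` and `v ↦ y`. -/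
noncomputable def affinePostcomp (f : K[X]) (u v x y : K) : K[X] :=
  C ((y - x) / (v - u)) * (f - C u) + C x

variable {f : K[X]} {u v : K}

theorem eval_affinePostcomp_of_eval_eq_left (x y : K) {a : K} (ha : f.eval a = u) :
    (affinePostcomp f u v x y).eval a = x := by
  simp [affinePostcomp, ha]

theorem eval_affinePostcomp_of_eval_eq_right (huv : u ≠ v) (x y : K) {b : K}
    (hb : f.eval b = v) : (affinePostcomp f u v x y).eval b = y := by
  have : v - u ≠ 0 := sub_ne_zero.mpr huv.symm
  simp only [affinePostcomp, eval_add, eval_mul, eval_sub, eval_C, hb]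
  field_simp
  ring

theorem natDegree_affinePostcomp (huv : u ≠ v) {x y : K} (hxy : x ≠ y) :
    (affinePostcomp f u v x y).natDegree = f.natDegree := by
  have hc : (y - x) / (v - u) ≠ 0 :=
    div_ne_zero (sub_ne_zero.mpr hxy.symm) (sub_ne_zero.mpr huv.symm)
  rw [affinePostcomp, natDegree_add_C, natDegree_C_mul hc, natDegree_sub_C]

theorem affinePostcomp_injective (huv : u ≠ v) {a b : K} (ha : f.eval a = u)
    (hb : f.eval b = v) :
    Function.Injective fun p : K × K => affinePostcomp f u v p.1 p.2 := by
  rintro ⟨x, y⟩ ⟨x', y'⟩ h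
  simp only at h
  refine Prod.ext ?_ ?_
  · rw [← eval_affinePostcomp_of_eval_eq_left x y ha (v := v), h,
      eval_affinePostcomp_of_eval_eq_left x' y' ha]
  · rw [← eval_affinePostcomp_of_eval_eq_right huv x y hb, h,
      eval_affinePostcomp_of_eval_eq_right huv x' y' hb]

end Polynomial

theorem stmt_9_general {K : Type*} [Field K] (d : ℕ) (hd : 1 ≤ d)
    (q : Fin (2 * d) → K) (hq : Function.Injective q)
    (A B : Finset (Fin (2 * d))) (hA : A.card = d) (hB : B.card = d)
    (hAB : Disjoint A B)
    (f : K[X]) (hfd : f.natDegree = d) (u v : K)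
    (huv : u ≠ v)
    (hfA : ∀ a ∈ A, f.eval (q a) = u) (hfB : ∀ b ∈ B, f.eval (q b) = v) :
    2 * d * (2 * d - 1) ≤
      Set.ncard {g : K[X] | g.natDegree = d ∧
        ∀ x ∈ Set.range q, g.eval x ∈ Set.range q} := by
  set T := {g : K[X] | g.natDegree = d ∧ ∀ x ∈ Set.range q, g.eval x ∈ Set.range q}
  have hAB_univ : A ∪ B = Finset.univ := Finset.eq_univ_of_card _ <| by
    rw [Finset.card_union_of_disjoint hAB, hA, hB, Fintype.card_fin, two_mul]
  obtain ⟨a, ha⟩ : A.Nonempty := Finset.card_pos.mp (by omega)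
  obtain ⟨b, hb⟩ : B.Nonempty := Finset.card_pos.mp (by omega)
  let F : Fin (2 * d) × Fin (2 * d) → K[X] := fun p => affinePostcomp f u v (q p.1) (q p.2)
  have hF_inj : Function.Injective F := fun p p' h =>
    hq.prodMap hq (affinePostcomp_injective huv (hfA a ha) (hfB b hb) h)
  let P : Finset (Fin (2 * d) × Fin (2 * d)) := Finset.univ.offDiag
  have hF_mem : ∀ p ∈ (P : Set _), F p ∈ T := by
    rintro ⟨i, j⟩ hij
    refine ⟨(natDegree_affinePostcomp huv (hq.ne (by simpa [P] using hij))).trans hfd, ?_⟩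
    rintro _ ⟨k, rfl⟩
    rcases Finset.mem_union.mp (hAB_univ ▸ Finset.mem_univ k) with hk | hk
    · exact ⟨i, (eval_affinePostcomp_of_eval_eq_left _ _ (hfA k hk)).symm⟩
    · exact ⟨j, (eval_affinePostcomp_of_eval_eq_right huv _ _ (hfB k hk)).symm⟩
  have hT : T.Finite := by
    refine (finite_setOf_natDegree_lt_card_eval_mem hq (Set.finite_range q)).subset ?_
    rintro g ⟨hg_deg, hg_maps⟩
    exact ⟨by rw [hg_deg, Fintype.card_fin]; omega, fun i => hg_maps _ ⟨i, rfl⟩⟩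
  calc 2 * d * (2 * d - 1) = (P : Set _).ncard := by
        rw [Set.ncard_coe_finset, Finset.offDiag_card, Finset.card_univ, Fintype.card_fin,
          Nat.mul_sub, mul_one]
    _ ≤ T.ncard := Set.ncard_le_ncard_of_injOn F hF_mem hF_inj.injOn hT

theorem stmt_9 {K : Type*} [Field K] (d : ℕ) (hd : 1 ≤ d)
    (q : Fin (2 * d) → K) (hq : Function.Injective q)
    (A B : Finset (Fin (2 * d))) (hA : A.card = d) (hB : B.card = d)
    (hAB : Disjoint A B)
    (f : K[X]) (hfd : f.natDegree = d) (u v : K)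
    (hu : u ∈ Set.range q) (hv : v ∈ Set.range q) (huv : u ≠ v)
    (hfA : ∀ a ∈ A, f.eval (q a) = u) (hfB : ∀ b ∈ B, f.eval (q b) = v) :
    2 * d * (2 * d - 1) ≤
      Set.ncard {g : K[X] | g.natDegree = d ∧
        ∀ x ∈ Set.range q, g.eval x ∈ Set.range q} :=
  stmt_9_general d hd q hq A B hA hB hAB f hfd u v huv hfA hfB
end

section
/- Let K be a field of characteristic 0, let d ≥ 1, and let q be a set of 2d distinct elements of K. Suppose f, g ∈ K[x] are polynomials of degree at most d and a₁ ≠ a₂, b₁ ≠ b₂ are elements of K such that (ℓ_f ∘ f)⁻¹({0,1}) = q = (ℓ_g ∘ g)⁻¹({0,1}) as multisets, where ℓ_f is the affine map sending a₁ ↦ 0, a₂ ↦ 1 and ℓ_g sends b₁ ↦ 0, b₂ ↦ 1. Then the partition of q into fibers of f equals the partition of q into fibers of g. -/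
open Polynomial

theorem stmt_10 {K : Type*} [Field K] [CharZero K] (d : ℕ) (hd : 1 ≤ d)
    (q : Finset K) (hq : q.card = 2 * d)
    (f g : K[X]) (hf : f.natDegree ≤ d) (hg : g.natDegree ≤ d)
    (a₁ a₂ b₁ b₂ : K) (ha : a₁ ≠ a₂) (hb : b₁ ≠ b₂)
    -- ℓ_f is the affine map sending a₁ ↦ 0, a₂ ↦ 1, and similarly ℓ_g
    (Lf Lg : K[X])
    (hLf : Lf = C (a₂ - a₁)⁻¹ * (X - C a₁))
    (hLg : Lg = C (b₂ - b₁)⁻¹ * (X - C b₁))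
    -- (ℓ_f ∘ f)⁻¹({0,1}) = q = (ℓ_g ∘ g)⁻¹({0,1}) as multisets
    (hfq : ((Lf.comp f) * (Lf.comp f - 1)).roots = q.val)
    (hgq : ((Lg.comp g) * (Lg.comp g - 1)).roots = q.val) :
    ∀ x ∈ q, ∀ y ∈ q, (f.eval x = f.eval y ↔ g.eval x = g.eval y) := by
  set F := Lf.comp f with hF
  set G := Lg.comp g with hG
  have he : (a₂ - a₁)⁻¹ ≠ 0 := inv_ne_zero (sub_ne_zero.mpr (Ne.symm ha))
  have hE : (b₂ - b₁)⁻¹ ≠ 0 := inv_ne_zero (sub_ne_zero.mpr (Ne.symm hb))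
  have hFf : F = C (a₂ - a₁)⁻¹ * (f - C a₁) := by
    rw [hF, hLf]; simp [mul_comp, sub_comp]
  have hGg : G = C (b₂ - b₁)⁻¹ * (g - C b₁) := by
    rw [hG, hLg]; simp [mul_comp, sub_comp]
  have hdF : F.natDegree ≤ d := by
    rw [hFf]
    exact (natDegree_C_mul_le _ _).trans ((natDegree_sub_le _ _).trans (by simp [hf]))
  have hdG : G.natDegree ≤ d := by
    rw [hGg]
    exact (natDegree_C_mul_le _ _).trans ((natDegree_sub_le _ _).trans (by simp [hg]))
  have hdF1 : (F - 1).natDegree ≤ d := (natDegree_sub_le _ _).trans (by simp [hdF])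
  have hdG1 : (G - 1).natDegree ≤ d := (natDegree_sub_le _ _).trans (by simp [hdG])
  have hcardq : Multiset.card q.val = 2 * d := hq
  -- nonvanishing
  have hP0 : F * (F - 1) ≠ 0 := by
    intro h
    rw [h, roots_zero] at hfq
    have := hcardq
    rw [← hfq] at this
    simp at this
    omega
  have hQ0 : G * (G - 1) ≠ 0 := by
    intro h
    rw [h, roots_zero] at hgq
    have := hcardq
    rw [← hgq] at this
    simp at this
    omega
  have hF0 : F ≠ 0 := fun h => hP0 (by rw [h, zero_mul])
  have hG0 : G ≠ 0 := fun h => hQ0 (by rw [h, zero_mul])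
  have hF10 : F - 1 ≠ 0 := fun h => hP0 (by rw [h, mul_zero])
  have hG10 : G - 1 ≠ 0 := fun h => hQ0 (by rw [h, mul_zero])
  -- degrees are exact
  have hcP : Multiset.card (F * (F - 1)).roots = 2 * d := by rw [hfq]; exact hcardq
  have hcQ : Multiset.card (G * (G - 1)).roots = 2 * d := by rw [hgq]; exact hcardq
  have hdP : (F * (F - 1)).natDegree = 2 * d := by
    have h1 : (F * (F - 1)).natDegree ≤ 2 * d :=
      (natDegree_mul_le).trans (by omega)
    have h2 := card_roots' (F * (F - 1))
    omega
  have hdQ : (G * (G - 1)).natDegree = 2 * d := by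
    have h1 : (G * (G - 1)).natDegree ≤ 2 * d :=
      (natDegree_mul_le).trans (by omega)
    have h2 := card_roots' (G * (G - 1))
    omega
  have hdFe : F.natDegree = d := by
    have := natDegree_mul hF0 hF10
    omega
  have hdGe : G.natDegree = d := by
    have := natDegree_mul hG0 hG10
    omega
  have hdF1e : (F - 1).natDegree = d := by
    have := natDegree_mul hF0 hF10
    omega
  have hdG1e : (G - 1).natDegree = d := by
    have := natDegree_mul hG0 hG10
    omega
  set a := F.leadingCoeff with haa
  set b := G.leadingCoeff with hbb
  have ha0 : a ≠ 0 := leadingCoeff_ne_zero.mpr hF0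
  have hb0 : b ≠ 0 := leadingCoeff_ne_zero.mpr hG0
  have hlcF1 : (F - 1).leadingCoeff = a := by
    rw [leadingCoeff, hdF1e, coeff_sub, coeff_one, if_neg (by omega), sub_zero,
      haa, leadingCoeff, hdFe]
  have hlcG1 : (G - 1).leadingCoeff = b := by
    rw [leadingCoeff, hdG1e, coeff_sub, coeff_one, if_neg (by omega), sub_zero,
      hbb, leadingCoeff, hdGe]
  have hlcP : (F * (F - 1)).leadingCoeff = a ^ 2 := by
    rw [leadingCoeff_mul, hlcF1, ← haa, sq]
  have hlcQ : (G * (G - 1)).leadingCoeff = b ^ 2 := by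
    rw [leadingCoeff_mul, hlcG1, ← hbb, sq]
  -- key polynomial identity
  have h1 := C_leadingCoeff_mul_prod_multiset_X_sub_C (p := F * (F - 1)) (by rw [hcP, hdP])
  have h2 := C_leadingCoeff_mul_prod_multiset_X_sub_C (p := G * (G - 1)) (by rw [hcQ, hdQ])
  rw [hlcP, hfq] at h1
  rw [hlcQ, hgq] at h2
  have key : C (b ^ 2) * (F * (F - 1)) = C (a ^ 2) * (G * (G - 1)) := by
    rw [← h1, ← h2]; ring
  -- the affine-shifted polynomials
  set A : K[X] := C (2 * b) * F - C b with hA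
  set B : K[X] := C (2 * a) * G - C a with hB
  have hfac : (A - B) * (A + B) = C (b ^ 2 - a ^ 2) := by
    have expand : (A - B) * (A + B) =
        4 * (C (b ^ 2) * (F * (F - 1)) - C (a ^ 2) * (G * (G - 1))) + (C (b ^ 2) - C (a ^ 2)) := by
      rw [hA, hB]
      simp only [map_mul, map_pow, map_ofNat]
      ring
    rw [expand, key, sub_self, mul_zero, zero_add, map_sub]
  have hcoA : A.coeff d = 2 * b * a := by
    rw [hA, coeff_sub, coeff_C_mul, coeff_C, if_neg (by omega), sub_zero, haa,
      leadingCoeff, hdFe]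
  have hcoB : B.coeff d = 2 * a * b := by
    rw [hB, coeff_sub, coeff_C_mul, coeff_C, if_neg (by omega), sub_zero, hbb,
      leadingCoeff, hdGe]
  have hAB0 : (A + B).coeff d ≠ 0 := by
    rw [coeff_add, hcoA, hcoB]
    have : (2:K) * b * a + 2 * a * b = 4 * (a * b) := by ring
    rw [this]
    exact mul_ne_zero (by norm_num) (mul_ne_zero ha0 hb0)
  have hABd : d ≤ (A + B).natDegree := le_natDegree_of_ne_zero hAB0
  have hsq : b ^ 2 = a ^ 2 := by
    by_contra h
    have hC0 : C (b ^ 2 - a ^ 2) ≠ 0 :=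
      fun hc => h (sub_eq_zero.mp (C_eq_zero.mp hc))
    have hne := hfac ▸ hC0
    obtain ⟨h3, h4⟩ := mul_ne_zero_iff.mp hne
    have := natDegree_mul h3 h4
    rw [hfac, natDegree_C] at this
    omega
  have hzero : (A - B) * (A + B) = 0 := by rw [hfac, hsq, sub_self, map_zero]
  have hcases : A = B ∨ A = -B := by
    rcases mul_eq_zero.mp hzero with h | h
    · exact Or.inl (sub_eq_zero.mp h)
    · exact Or.inr (eq_neg_of_add_eq_zero_left h)
  -- evaluation statements
  have evA : ∀ z : K, A.eval z = 2 * b * (a₂ - a₁)⁻¹ * f.eval z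
      - (2 * b * (a₂ - a₁)⁻¹ * a₁ + b) := by
    intro z
    rw [hA, hFf]
    simp only [eval_sub, eval_mul, eval_C]
    ring
  have evB : ∀ z : K, B.eval z = 2 * a * (b₂ - b₁)⁻¹ * g.eval z
      - (2 * a * (b₂ - b₁)⁻¹ * b₁ + a) := by
    intro z
    rw [hB, hGg]
    simp only [eval_sub, eval_mul, eval_C]
    ring
  have hs1 : (2 : K) * b * (a₂ - a₁)⁻¹ ≠ 0 :=
    mul_ne_zero (mul_ne_zero (by norm_num) hb0) he
  have hs2 : (2 : K) * a * (b₂ - b₁)⁻¹ ≠ 0 :=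
    mul_ne_zero (mul_ne_zero (by norm_num) ha0) hE
  have iff1 : ∀ z w : K, f.eval z = f.eval w ↔ A.eval z = A.eval w := by
    intro z w
    rw [evA, evA, sub_left_inj]
    exact ⟨fun h => by rw [h], fun h => mul_left_cancel₀ hs1 h⟩
  have iff2 : ∀ z w : K, g.eval z = g.eval w ↔ B.eval z = B.eval w := by
    intro z w
    rw [evB, evB, sub_left_inj]
    exact ⟨fun h => by rw [h], fun h => mul_left_cancel₀ hs2 h⟩
  intro x _ y _
  rw [iff1, iff2]
  rcases hcases with h | h
  · rw [h]
  · rw [h]; simp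
end

section
/- Let d ≥ 1, let n > 2d, and let f ∈ ℂ[x] be a polynomial of degree d such that f(ζ) is an n-th root of unity for every n-th root of unity ζ. Then f(x) = ξ·x^d where ξ is an n-th root of unity. -/
/-!
On the unit circle `conj z = z⁻¹`, so the conjugate reflection `g = Xᴺ · f̄(1/X)` of `f`
(`N = deg f`) satisfies `g(z) = conj (f z) · zᴺ` there. If `|f| = 1` at more than `2N` points of
the circle, then `f g - Xᴺ`, of degree at most `2N`, vanishes at all of them, so `f g = Xᴺ`;
as `X` is prime, `f` is a monomial.
-/

open Polynomial ComplexConjugate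

namespace Polynomial

theorem eq_C_leadingCoeff_mul_X_pow_of_dvd_X_pow {R : Type*} [CommRing R] [IsDomain R]
    {p : R[X]} {N : ℕ} (h : p ∣ X ^ N) : p = C p.leadingCoeff * X ^ p.natDegree := by
  obtain ⟨i, -, hassoc⟩ := (dvd_prime_pow prime_X N).1 h
  obtain ⟨u, rfl⟩ := hassoc.symm
  obtain ⟨r, hr, hu⟩ := Polynomial.isUnit_iff.1 u.isUnit
  rw [← hu, mul_comm, leadingCoeff_C_mul_X_pow, natDegree_C_mul_X_pow _ _ hr.ne_zero]

theorem eval_map_conj_reflect {f : ℂ[X]} {N : ℕ} (hf : f.natDegree ≤ N) {z : ℂ}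
    (hz : ‖z‖ = 1) : ((f.reflect N).map (starRingEnd ℂ)).eval z = conj (f.eval z) * z ^ N := by
  have hz0 : z ≠ 0 := norm_ne_zero_iff.1 (hz ▸ one_ne_zero)
  let := invertibleOfNonzero ((_root_.map_ne_zero (starRingEnd ℂ)).2 hz0)
  have hinv : ⅟(conj z) = z := by
    rw [invOf_eq_inv, Complex.inv_eq_conj (by simpa using hz), Complex.conj_conj]
  have key := eval₂_reflect_mul_pow (starRingEnd ℂ) (conj z) N f hf
  rw [hinv, eval₂_at_apply] at key
  rw [eval_map, ← key, mul_assoc, ← mul_pow, ← Complex.inv_eq_conj hz, inv_mul_cancel₀ hz0,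
    one_pow, mul_one]

theorem eq_C_leadingCoeff_mul_X_pow_of_norm_eval_eq_one {f : ℂ[X]} {S : Finset ℂ}
    (hS : 2 * f.natDegree < S.card) (hS_norm : ∀ z ∈ S, ‖z‖ = 1)
    (hf : ∀ z ∈ S, ‖f.eval z‖ = 1) : f = C f.leadingCoeff * X ^ f.natDegree := by
  set g := (f.reflect f.natDegree).map (starRingEnd ℂ)
  have hg : g.natDegree ≤ f.natDegree :=
    natDegree_map_le.trans (natDegree_reflect_le.trans (by simp))
  have hfg : f * g - X ^ f.natDegree = 0 := by
    refine eq_zero_of_natDegree_lt_card_of_eval_eq_zero' _ S (fun z hz => ?_) ?_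
    · rw [eval_sub, eval_mul, eval_map_conj_reflect le_rfl (hS_norm z hz), ← mul_assoc,
        Complex.mul_conj', hf z hz]
      simp
    · calc (f * g - X ^ f.natDegree).natDegree ≤ 2 * f.natDegree :=
            (natDegree_sub_le _ _).trans <|
              max_le ((natDegree_mul_le (p := f) (q := g)).trans (by omega)) (by simp; omega)
        _ < S.card := hS
  exact eq_C_leadingCoeff_mul_X_pow_of_dvd_X_pow ⟨g, (sub_eq_zero.1 hfg).symm⟩

end Polynomial

theorem stmt_11_general (d n : ℕ) (hn : 2 * d < n)
    (f : ℂ[X]) (hfd : f.natDegree = d)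
    (hmap : ∀ ζ : ℂ, ζ ^ n = 1 → (f.eval ζ) ^ n = 1) :
    ∃ ξ : ℂ, ξ ^ n = 1 ∧ f = C ξ * X ^ d := by
  have hn0 : n ≠ 0 := by omega
  have hmem {ζ : ℂ} : ζ ∈ nthRootsFinset n (1 : ℂ) ↔ ζ ^ n = 1 :=
    mem_nthRootsFinset (Nat.pos_of_ne_zero hn0) 1
  have hcard : (nthRootsFinset n (1 : ℂ)).card = n :=
    (Complex.isPrimitiveRoot_exp n hn0).card_nthRootsFinset
  have hf := eq_C_leadingCoeff_mul_X_pow_of_norm_eval_eq_one (S := nthRootsFinset n (1 : ℂ))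
    (by omega) (fun ζ hζ => Complex.norm_eq_one_of_pow_eq_one (hmem.1 hζ) hn0)
    (fun ζ hζ => Complex.norm_eq_one_of_pow_eq_one (hmap ζ (hmem.1 hζ)) hn0)
  rw [hfd] at hf
  refine ⟨f.leadingCoeff, ?_, hf⟩
  have h1 := hmap 1 (one_pow n)
  rwa [hf, eval_mul, eval_C, eval_pow, eval_X, one_pow, mul_one] at h1

theorem stmt_11 (d n : ℕ) (hd : 1 ≤ d) (hn : 2 * d < n)
    (f : ℂ[X]) (hfd : f.natDegree = d)
    (hmap : ∀ ζ : ℂ, ζ ^ n = 1 → (f.eval ζ) ^ n = 1) :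
    ∃ ξ : ℂ, ξ ^ n = 1 ∧ f = C ξ * X ^ d :=
  stmt_11_general d n hn f hfd hmap
end
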